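/- arXiv:1301.1518 — 3 statements merged into one kernel-verified Lean document; each statement's English description precedes it below -/
import Mathlib

section
/- In R/𝓘_K, for σ, σ' ∈ K and τ, τ' ⊆ [m] with σ ∩ τ = ∅ and σ' ∩ τ' = ∅, the product of basis monomials is given by: (u_σ t_τ)·(u_{σ'} t_{τ'}) = 0 if σ ∩ σ' ≠ ∅, or τ ∩ σ' ≠ ∅, or σ ∪ σ' ∉ K; and otherwise (u_σ t_τ)·(u_{σ'} t_{τ'}) = (−1)^{ε(σ,σ')} u_{σ∪σ'} t_{(τ∪τ')∖(σ∪σ')}, where ε(σ,σ') = #{(j,i) ∈ σ × σ' : i < j}. -/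
/-!
STATEMENT 4: In `R/𝓘_K`, for `σ, σ' ∈ K` and `τ, τ' ⊆ [m]` with `σ ∩ τ = ∅` and
`σ' ∩ τ' = ∅`, the product of basis monomials is:
`(u_σ t_τ)·(u_{σ'} t_{τ'}) = 0` if `σ ∩ σ' ≠ ∅`, or `τ ∩ σ' ≠ ∅`, or `σ ∪ σ' ∉ K`;
and otherwise
`(u_σ t_τ)·(u_{σ'} t_{τ'}) = (−1)^{ε(σ,σ')} u_{σ∪σ'} t_{(τ∪τ')∖(σ∪σ')}` with
`ε(σ,σ') = #{(j,i) ∈ σ × σ' : i < j}`.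

The free noncommutative algebra `ℤ⟨u_1,…,u_m,t_1,…,t_m⟩` is modelled as
`FreeAlgebra ℤ (Fin m ⊕ Fin m)` (`u i = ι (inl i)`, `t i = ι (inr i)`), and the
quotient by the two-sided ideal `J_K` generated by `gens K` as the `RingQuot` of the
relation identifying each generator with `0`.
-/

abbrev FA (m : ℕ) : Type := FreeAlgebra ℤ (Fin m ⊕ Fin m)

def ugen {m : ℕ} (i : Fin m) : FA m := FreeAlgebra.ι ℤ (Sum.inl i)

def tgen {m : ℕ} (i : Fin m) : FA m := FreeAlgebra.ι ℤ (Sum.inr i)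

/-- `u_σ = u_{i_1} ⋯ u_{i_k}` for `σ = {i_1 < ⋯ < i_k}`. -/
def uprod {m : ℕ} (σ : Finset (Fin m)) : FA m :=
  ((σ.sort (· ≤ ·)).map (fun i => ugen i)).prod

/-- `t_τ = t_{j_1} ⋯ t_{j_l}` for `τ = {j_1 < ⋯ < j_l}`. -/
def tprodGen {m : ℕ} (τ : Finset (Fin m)) : FA m :=
  ((τ.sort (· ≤ ·)).map (fun j => tgen j)).prod

/-- The generators of the two-sided ideal `J_K`. -/
def gens {m : ℕ} (K : Finset (Finset (Fin m))) : Set (FA m) :=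
  {x | (∃ i, x = ugen i * tgen i - ugen i) ∨
       (∃ i, x = tgen i * ugen i) ∨
       (∃ i, x = tgen i * tgen i - tgen i) ∨
       (∃ i, x = ugen i * ugen i) ∨
       (∃ i j, i ≠ j ∧ x = ugen i * tgen j - tgen j * ugen i) ∨
       (∃ i j, i ≠ j ∧ x = ugen i * ugen j + ugen j * ugen i) ∨
       (∃ i j, i ≠ j ∧ x = tgen i * tgen j - tgen j * tgen i) ∨
       (∃ σ : Finset (Fin m), σ ∉ K ∧ x = uprod σ)}

/-- The relation whose `RingQuot` is the quotient by the two-sided ideal `J_K`. -/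
def relK {m : ℕ} (K : Finset (Finset (Fin m))) : FA m → FA m → Prop :=
  fun x y => x ∈ gens K ∧ y = 0

/-- The quotient algebra `R/𝓘_K`. -/
abbrev RI (m : ℕ) (K : Finset (Finset (Fin m))) : Type := RingQuot (relK (m := m) K)

/-- The image `u_σ t_τ` of a square-free monomial in `R/𝓘_K`. -/
noncomputable def mono {m : ℕ} (K : Finset (Finset (Fin m))) (σ τ : Finset (Fin m)) :
    RI m K :=
  RingQuot.mkAlgHom ℤ (relK K) (uprod σ * tprodGen τ)

/-- `ε(σ,σ') = #{(j,i) ∈ σ × σ' : i < j}`. -/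
def epsSign {m : ℕ} (σ σ' : Finset (Fin m)) : ℕ :=
  ((σ ×ˢ σ').filter (fun ji => ji.2 < ji.1)).card

/-!
In `R/𝓘_K` the `u_i` anticommute and square to zero, the `t_i` are commuting idempotents,
`t_i` commutes with `u_j` for `i ≠ j`, and `t_i u_i = 0`, `u_i t_i = u_i`. Hence in
`u_σ t_τ u_{σ'} t_{τ'}` the factor `t_τ u_{σ'}` vanishes if `τ ∩ σ' ≠ ∅` and commutes otherwise.
Then `u_σ u_{σ'}` is a product in an exterior algebra: zero if `σ ∩ σ' ≠ ∅`, and otherwise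
`(-1)^ε u_{σ ∪ σ'}`, `ε` counting the transpositions needed to sort `σ` followed by `σ'`.
Finally `t_τ t_{τ'} = t_{τ ∪ τ'}`, and every `t_j` with `j ∈ σ ∪ σ'` is absorbed by `u_{σ ∪ σ'}`.
-/

open Finset

section OrderedProd

variable {ι M : Type*} [LinearOrder ι] [Monoid M]

def orderedProd (f : ι → M) (s : Finset ι) : M :=
  ((s.sort (· ≤ ·)).map f).prod

@[simp]
lemma orderedProd_empty (f : ι → M) : orderedProd f ∅ = 1 := by
  simp [orderedProd]

lemma orderedProd_insert_of_forall_lt (f : ι → M) {a : ι} {s : Finset ι}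
    (h : ∀ x ∈ s, a < x) : orderedProd f (insert a s) = f a * orderedProd f s := by
  rw [orderedProd, sort_insert _ (fun x hx => (h x hx).le) fun ha => lt_irrefl a (h a ha)]
  rfl

lemma map_orderedProd {N F : Type*} [Monoid N] [FunLike F M N] [MonoidHomClass F M N]
    (g : F) (f : ι → M) (s : Finset ι) : g (orderedProd f s) = orderedProd (g ∘ f) s := by
  rw [orderedProd, map_list_prod, List.map_map, orderedProd]

lemma Commute.orderedProd_left {f : ι → M} {s : Finset ι} {b : M}
    (h : ∀ i ∈ s, Commute (f i) b) : Commute (orderedProd f s) b := by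
  refine Commute.list_prod_left _ _ fun _ hx => ?_
  obtain ⟨i, hi, rfl⟩ := List.mem_map.mp hx
  exact h i ((mem_sort _).mp hi)

end OrderedProd

section CommutingIdempotents

variable {ι M : Type*} [LinearOrder ι] [Monoid M] {y : ι → M}

lemma mul_orderedProd_of_commute_of_idem (hcomm : ∀ i j, Commute (y i) (y j))
    (hidem : ∀ i, IsIdempotentElem (y i)) (a : ι) (s : Finset ι) :
    y a * orderedProd y s = orderedProd y (insert a s) := by
  induction s using Finset.induction_on_min with
  | empty => simp [orderedProd]
  | insert b s hb ih =>
    rcases lt_trichotomy a b with hab | rfl | hba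
    · refine (orderedProd_insert_of_forall_lt y fun x hx => ?_).symm
      rcases mem_insert.mp hx with rfl | hx
      exacts [hab, hab.trans (hb x hx)]
    · rw [orderedProd_insert_of_forall_lt y hb, ← mul_assoc, hidem a, insert_idem,
        orderedProd_insert_of_forall_lt y hb]
    · rw [orderedProd_insert_of_forall_lt y hb]
      have hb' : ∀ x ∈ insert a s, b < x := by
        simpa only [forall_mem_insert] using ⟨hba, hb⟩
      rw [(hcomm a b).left_comm, ih, ← orderedProd_insert_of_forall_lt y hb', insert_comm]

lemma orderedProd_union_of_commute_of_idem
    (hcomm : ∀ i j, Commute (y i) (y j)) (hidem : ∀ i, IsIdempotentElem (y i))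
    (s t : Finset ι) : orderedProd y (s ∪ t) = orderedProd y s * orderedProd y t := by
  induction s using Finset.induction_on with
  | empty => simp
  | insert a s _ ih =>
    rw [insert_union, ← mul_orderedProd_of_commute_of_idem hcomm hidem, ih, ← mul_assoc,
      mul_orderedProd_of_commute_of_idem hcomm hidem]

end CommutingIdempotents

section Anticommuting

variable {ι R : Type*} [LinearOrder ι] [Ring R] {x : ι → R}

lemma mul_orderedProd_of_anticommute_of_mem (hsq : ∀ i, x i * x i = 0)
    (hanti : ∀ i j, i ≠ j → x i * x j = -(x j * x i)) {a : ι} {s : Finset ι} (ha : a ∈ s) :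
    x a * orderedProd x s = 0 := by
  induction s using Finset.induction_on_min with
  | empty => simp at ha
  | insert b s hb ih =>
    rw [orderedProd_insert_of_forall_lt x hb, ← mul_assoc]
    rcases eq_or_ne a b with rfl | hab
    · rw [hsq, zero_mul]
    · have has : a ∈ s := (mem_insert.mp ha).resolve_left hab
      rw [hanti a b hab, neg_mul, mul_assoc, ih has, mul_zero, neg_zero]

lemma mul_orderedProd_of_anticommute_of_notMem
    (hanti : ∀ i j, i ≠ j → x i * x j = -(x j * x i)) {a : ι} {s : Finset ι} (ha : a ∉ s) :
    x a * orderedProd x s = (-1 : ℤ) ^ #{j ∈ s | j < a} • orderedProd x (insert a s) := by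
  induction s using Finset.induction_on_min with
  | empty => simp [orderedProd]
  | insert b s hb ih =>
    have hab : a ≠ b := fun h => ha (h ▸ mem_insert_self a s)
    have has : a ∉ s := fun h => ha (mem_insert_of_mem h)
    rw [orderedProd_insert_of_forall_lt x hb]
    rcases hab.lt_or_gt with hab | hba
    · have hlt : ∀ x ∈ insert b s, a < x := by
        simpa only [forall_mem_insert] using ⟨hab, fun x hx => hab.trans (hb x hx)⟩
      have hcard : #{j ∈ insert b s | j < a} = 0 := by
        simpa [filter_eq_empty_iff] using fun x hx => (hlt x hx).le
      rw [hcard, pow_zero, one_smul, orderedProd_insert_of_forall_lt x hlt,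
        orderedProd_insert_of_forall_lt x hb]
    · have hb' : ∀ x ∈ insert a s, b < x := by
        simpa only [forall_mem_insert] using ⟨hba, hb⟩
      have hcard : #{j ∈ insert b s | j < a} = #{j ∈ s | j < a} + 1 := by
        rw [filter_insert, if_pos hba, card_insert_of_notMem]
        exact fun h => lt_irrefl b (hb b (mem_filter.mp h).1)
      rw [← mul_assoc, hanti a b hab, neg_mul, mul_assoc, ih has, mul_smul_comm,
        ← orderedProd_insert_of_forall_lt x hb', insert_comm, hcard, pow_succ, mul_neg_one,
        neg_smul]

lemma card_filter_product_lt_insert {a : ι} {s t : Finset ι} (ha : a ∉ s) :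
    #{p ∈ insert a s ×ˢ t | p.2 < p.1} = #{i ∈ t | i < a} + #{p ∈ s ×ˢ t | p.2 < p.1} := by
  have hsum : ∀ s : Finset ι, #{p ∈ s ×ˢ t | p.2 < p.1} = ∑ j ∈ s, #{i ∈ t | i < j} := by
    intro s
    simp only [card_filter, sum_product]
  rw [hsum, hsum, sum_insert ha]

lemma orderedProd_mul_orderedProd_of_anticommute (hsq : ∀ i, x i * x i = 0)
    (hanti : ∀ i j, i ≠ j → x i * x j = -(x j * x i)) (s t : Finset ι) :
    orderedProd x s * orderedProd x t =
      if Disjoint s t then (-1 : ℤ) ^ #{p ∈ s ×ˢ t | p.2 < p.1} • orderedProd x (s ∪ t)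
      else 0 := by
  induction s using Finset.induction_on_min with
  | empty => simp
  | insert b s hb ih =>
    have hbs : b ∉ s := fun h => lt_irrefl b (hb b h)
    rw [orderedProd_insert_of_forall_lt x hb, mul_assoc, ih]
    by_cases hst : Disjoint s t
    · rw [if_pos hst, mul_smul_comm]
      by_cases hbt : b ∈ t
      · rw [mul_orderedProd_of_anticommute_of_mem hsq hanti (mem_union_right s hbt), smul_zero,
          if_neg fun h => disjoint_left.mp h (mem_insert_self b s) hbt]
      · have hcard : #{j ∈ s ∪ t | j < b} = #{j ∈ t | j < b} := by
          rw [filter_union, filter_false_of_mem fun j hj => (hb j hj).not_gt, empty_union]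
        rw [mul_orderedProd_of_anticommute_of_notMem hanti (by simp [hbs, hbt]), smul_smul,
          ← pow_add, hcard, add_comm, ← card_filter_product_lt_insert hbs, insert_union,
          if_pos (disjoint_insert_left.mpr ⟨hbt, hst⟩)]
    · rw [if_neg hst, mul_zero, if_neg fun h => hst (h.mono_left (subset_insert b s))]

end Anticommuting

section CrossAnnihilating

variable {ι M : Type*} [LinearOrder ι] [MonoidWithZero M] {x y : ι → M}

lemma mul_orderedProd_eq_zero_of_mem (hzero : ∀ i, y i * x i = 0)
    (hcomm : ∀ i j, i ≠ j → Commute (y i) (x j)) {a : ι} {s : Finset ι} (ha : a ∈ s) :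
    y a * orderedProd x s = 0 := by
  induction s using Finset.induction_on_min with
  | empty => simp at ha
  | insert b s hb ih =>
    rw [orderedProd_insert_of_forall_lt x hb]
    rcases eq_or_ne a b with rfl | hab
    · rw [← mul_assoc, hzero, zero_mul]
    · rw [(hcomm a b hab).left_comm, ih ((mem_insert.mp ha).resolve_left hab), mul_zero]

lemma orderedProd_mul_orderedProd_eq_zero (hzero : ∀ i, y i * x i = 0)
    (hcomm : ∀ i j, i ≠ j → Commute (y i) (x j)) {s t : Finset ι} (hst : ¬Disjoint s t) :
    orderedProd y s * orderedProd x t = 0 := by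
  induction s using Finset.induction_on_min with
  | empty => simp at hst
  | insert b s hb ih =>
    rw [orderedProd_insert_of_forall_lt y hb, mul_assoc]
    by_cases hs : Disjoint s t
    · have hbt : b ∈ t := by
        by_contra hbt
        exact hst (disjoint_insert_left.mpr ⟨hbt, hs⟩)
      have hcomm' : Commute (orderedProd y s) (orderedProd x t) :=
        Commute.orderedProd_left fun i hi => (Commute.orderedProd_left fun j hj =>
          (hcomm i j fun h => disjoint_left.mp hs hi (h ▸ hj)).symm).symm
      rw [hcomm'.eq, ← mul_assoc, mul_orderedProd_eq_zero_of_mem hzero hcomm hbt, zero_mul]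
    · rw [ih hs, mul_zero]

end CrossAnnihilating

section Absorbing

variable {ι M : Type*} [LinearOrder ι] [Monoid M] {x y : ι → M}

lemma orderedProd_mul_of_mem (habsorb : ∀ i, x i * y i = x i)
    (hcomm : ∀ i j, i ≠ j → Commute (y i) (x j)) {a : ι} {s : Finset ι} (ha : a ∈ s) :
    orderedProd x s * y a = orderedProd x s := by
  induction s using Finset.induction_on_min with
  | empty => simp at ha
  | insert b s hb ih =>
    rw [orderedProd_insert_of_forall_lt x hb, mul_assoc]
    rcases eq_or_ne a b with rfl | hab
    · have hcomm' : Commute (orderedProd x s) (y a) :=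
        Commute.orderedProd_left fun j hj => (hcomm a j (hb j hj).ne).symm
      rw [hcomm'.eq, ← mul_assoc, habsorb]
    · rw [ih ((mem_insert.mp ha).resolve_left hab)]

lemma orderedProd_mul_orderedProd_sdiff (hcomm_y : ∀ i j, Commute (y i) (y j))
    (hidem : ∀ i, IsIdempotentElem (y i)) (habsorb : ∀ i, x i * y i = x i)
    (hcomm : ∀ i j, i ≠ j → Commute (y i) (x j)) (s t : Finset ι) :
    orderedProd x s * orderedProd y t = orderedProd x s * orderedProd y (t \ s) := by
  have habsorb_subset : ∀ u ⊆ s, orderedProd x s * orderedProd y u = orderedProd x s := by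
    intro u hu
    induction u using Finset.induction_on with
    | empty => simp
    | insert a u _ ih =>
      rw [← mul_orderedProd_of_commute_of_idem hcomm_y hidem, ← mul_assoc,
        orderedProd_mul_of_mem habsorb hcomm (hu (mem_insert_self a u)),
        ih ((subset_insert a u).trans hu)]
  conv_lhs => rw [← sdiff_union_inter t s, union_comm,
    orderedProd_union_of_commute_of_idem hcomm_y hidem, ← mul_assoc,
    habsorb_subset _ inter_subset_right]

end Absorbing

namespace RI

variable {m : ℕ} (K : Finset (Finset (Fin m)))

noncomputable def u (i : Fin m) : RI m K := RingQuot.mkAlgHom ℤ (relK K) (ugen i)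

noncomputable def t (i : Fin m) : RI m K := RingQuot.mkAlgHom ℤ (relK K) (tgen i)

lemma mkAlgHom_eq_zero_of_mem_gens {x : FA m} (hx : x ∈ gens K) :
    RingQuot.mkAlgHom ℤ (relK K) x = 0 :=
  (RingQuot.mkAlgHom_rel ℤ ⟨hx, rfl⟩).trans (map_zero _)

variable {K}

lemma u_mul_t_self (i : Fin m) : u K i * t K i = u K i := by
  have h := mkAlgHom_eq_zero_of_mem_gens K (Or.inl ⟨i, rfl⟩)
  rwa [map_sub, map_mul, sub_eq_zero] at h

lemma t_mul_u_self (i : Fin m) : t K i * u K i = 0 := by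
  have h := mkAlgHom_eq_zero_of_mem_gens K (Or.inr <| Or.inl ⟨i, rfl⟩)
  rwa [map_mul] at h

lemma isIdempotentElem_t (i : Fin m) : IsIdempotentElem (t K i) := by
  have h := mkAlgHom_eq_zero_of_mem_gens K (Or.inr <| Or.inr <| Or.inl ⟨i, rfl⟩)
  rwa [map_sub, map_mul, sub_eq_zero] at h

lemma u_mul_u_self (i : Fin m) : u K i * u K i = 0 := by
  have h := mkAlgHom_eq_zero_of_mem_gens K (Or.inr <| Or.inr <| Or.inr <| Or.inl ⟨i, rfl⟩)
  rwa [map_mul] at h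

lemma commute_t_u {i j : Fin m} (h : i ≠ j) : Commute (t K i) (u K j) := by
  have h := mkAlgHom_eq_zero_of_mem_gens K
    (Or.inr <| Or.inr <| Or.inr <| Or.inr <| Or.inl ⟨j, i, h.symm, rfl⟩)
  rw [map_sub, map_mul, map_mul, sub_eq_zero] at h
  exact h.symm

lemma u_mul_u_of_ne {i j : Fin m} (h : i ≠ j) : u K i * u K j = -(u K j * u K i) := by
  have h := mkAlgHom_eq_zero_of_mem_gens K
    (Or.inr <| Or.inr <| Or.inr <| Or.inr <| Or.inr <| Or.inl ⟨i, j, h, rfl⟩)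
  rw [map_add, map_mul, map_mul] at h
  exact eq_neg_of_add_eq_zero_left h

lemma commute_t_t (i j : Fin m) : Commute (t K i) (t K j) := by
  rcases eq_or_ne i j with rfl | h
  · exact Commute.refl _
  have h := mkAlgHom_eq_zero_of_mem_gens K
    (Or.inr <| Or.inr <| Or.inr <| Or.inr <| Or.inr <| Or.inr <| Or.inl ⟨i, j, h, rfl⟩)
  rwa [map_sub, map_mul, map_mul, sub_eq_zero] at h

lemma orderedProd_u_eq_zero {σ : Finset (Fin m)} (hσ : σ ∉ K) : orderedProd (u K) σ = 0 := by
  have h := mkAlgHom_eq_zero_of_mem_gens K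
    (Or.inr <| Or.inr <| Or.inr <| Or.inr <| Or.inr <| Or.inr <| Or.inr ⟨σ, hσ, rfl⟩)
  rwa [uprod, ← orderedProd, map_orderedProd] at h

lemma mono_eq_orderedProd_mul_orderedProd (σ τ : Finset (Fin m)) :
    mono K σ τ = orderedProd (u K) σ * orderedProd (t K) τ := by
  rw [mono, map_mul, uprod, tprodGen, ← orderedProd, ← orderedProd, map_orderedProd,
    map_orderedProd]
  rfl

lemma mono_eq_zero_of_notMem {σ : Finset (Fin m)} (hσ : σ ∉ K) (τ : Finset (Fin m)) :
    mono K σ τ = 0 := by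
  rw [mono_eq_orderedProd_mul_orderedProd, orderedProd_u_eq_zero hσ, zero_mul]

lemma mono_mul_mono_eq_zero_of_not_disjoint {σ τ σ' : Finset (Fin m)} (τ' : Finset (Fin m))
    (h : ¬Disjoint τ σ') : mono K σ τ * mono K σ' τ' = 0 := by
  rw [mono_eq_orderedProd_mul_orderedProd, mono_eq_orderedProd_mul_orderedProd, mul_assoc,
    ← mul_assoc (orderedProd (t K) τ), orderedProd_mul_orderedProd_eq_zero t_mul_u_self
      (fun _ _ => commute_t_u) h, zero_mul, mul_zero]

lemma mono_mul_mono_of_disjoint (σ : Finset (Fin m)) {τ σ' : Finset (Fin m)}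
    (τ' : Finset (Fin m)) (h : Disjoint τ σ') :
    mono K σ τ * mono K σ' τ' =
      if Disjoint σ σ' then
        (-1 : ℤ) ^ epsSign σ σ' • mono K (σ ∪ σ') ((τ ∪ τ') \ (σ ∪ σ'))
      else 0 := by
  have hcomm : Commute (orderedProd (t K) τ) (orderedProd (u K) σ') :=
    Commute.orderedProd_left fun i hi => (Commute.orderedProd_left fun j hj =>
      (commute_t_u fun hij : i = j => disjoint_left.mp h hi (hij ▸ hj)).symm).symm
  rw [mono_eq_orderedProd_mul_orderedProd, mono_eq_orderedProd_mul_orderedProd, mul_assoc,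
    ← mul_assoc (orderedProd (t K) τ), hcomm.eq, mul_assoc, ← mul_assoc,
    ← orderedProd_union_of_commute_of_idem commute_t_t isIdempotentElem_t,
    orderedProd_mul_orderedProd_of_anticommute u_mul_u_self (fun _ _ => u_mul_u_of_ne)]
  split_ifs
  · rw [smul_mul_assoc, orderedProd_mul_orderedProd_sdiff commute_t_t isIdempotentElem_t
      u_mul_t_self (fun _ _ => commute_t_u), ← mono_eq_orderedProd_mul_orderedProd]
    -- `epsSign` unfolds to the inversion count, and the `DecidableEq (Fin m)` instances agree
    rfl
  · rw [zero_mul]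

end RI

theorem mono_mul_mono_general {m : ℕ} (K : Finset (Finset (Fin m)))
    (σ τ σ' τ' : Finset (Fin m)) :
    ((σ ∩ σ' ≠ ∅ ∨ τ ∩ σ' ≠ ∅ ∨ σ ∪ σ' ∉ K) →
      mono K σ τ * mono K σ' τ' = 0) ∧
    (σ ∩ σ' = ∅ → τ ∩ σ' = ∅ → σ ∪ σ' ∈ K →
      mono K σ τ * mono K σ' τ' =
        ((-1 : ℤ) ^ epsSign σ σ') • mono K (σ ∪ σ') ((τ ∪ τ') \ (σ ∪ σ'))) := by
  simp only [Ne, ← disjoint_iff_inter_eq_empty]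
  refine ⟨fun h => ?_, fun hσσ' hτσ' _ => ?_⟩
  · by_cases hτσ' : Disjoint τ σ'
    · rw [RI.mono_mul_mono_of_disjoint σ τ' hτσ']
      split_ifs with hσσ'
      · rw [RI.mono_eq_zero_of_notMem (by tauto), zsmul_zero]
      · rfl
    · exact RI.mono_mul_mono_eq_zero_of_not_disjoint τ' hτσ'
  · rw [RI.mono_mul_mono_of_disjoint σ τ' hτσ', if_pos hσσ']

/-- The multiplication rule for basis monomials of `R/𝓘_K`. -/
theorem mono_mul_mono {m : ℕ} (K : Finset (Finset (Fin m)))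
    (hKempty : (∅ : Finset (Fin m)) ∈ K)
    (hKdown : ∀ σ ∈ K, ∀ τ ⊆ σ, τ ∈ K)
    (σ τ σ' τ' : Finset (Fin m))
    (hσ : σ ∈ K) (hσ' : σ' ∈ K)
    (hστ : Disjoint σ τ) (hστ' : Disjoint σ' τ') :
    ((σ ∩ σ' ≠ ∅ ∨ τ ∩ σ' ≠ ∅ ∨ σ ∪ σ' ∉ K) →
      mono K σ τ * mono K σ' τ' = 0) ∧
    (σ ∩ σ' = ∅ → τ ∩ σ' = ∅ → σ ∪ σ' ∈ K →
      mono K σ τ * mono K σ' τ' =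
        ((-1 : ℤ) ^ epsSign σ σ') • mono K (σ ∪ σ') ((τ ∪ τ') \ (σ ∪ σ'))) :=
  mono_mul_mono_general K σ τ σ' τ'
end

section
/- (Additive Hochster formula) For every p ≥ 0 there is an isomorphism of abelian groups H^p(T(K)) ≅ ⊕_{ω ⊆ [m]} H̃^{p−1}(K_ω). -/
/-!
STATEMENT 7 (Additive Hochster formula): for every `p ≥ 0`,
`H^p(T(K)) ≅ ⊕_{ω ⊆ [m]} H̃^{p−1}(K_ω)` as abelian groups.

Indexing convention: the piece of index `p` of the reduced cochain complex of `K_ω`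
below has basis the simplices of `K_ω` of cardinality `p`, i.e. it is `C̃^{p−1}(K_ω)`
(the empty simplex sits in reduced degree `−1`), so its cohomology at index `p` is
`H̃^{p−1}(K_ω)`.
-/

def TB {m : ℕ} (K : Finset (Finset (Fin m))) (p : ℕ) : Type :=
  {x : Finset (Fin m) × Finset (Fin m) // x.1 ∈ K ∧ Disjoint x.1 x.2 ∧ x.1.card = p}

noncomputable def dTaux {m : ℕ} (K : Finset (Finset (Fin m))) (p : ℕ) (b : TB K p) :
    (TB K (p + 1) →₀ ℤ) :=
  ∑ i ∈ b.1.2.attach,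
    if h : insert i.1 b.1.1 ∈ K then
      Finsupp.single
        ⟨(insert i.1 b.1.1, b.1.2.erase i.1),
          h,
          Finset.disjoint_insert_left.mpr
            ⟨Finset.notMem_erase _ _, b.2.2.1.mono_right (Finset.erase_subset _ _)⟩,
          by
            rw [Finset.card_insert_of_notMem (Finset.disjoint_right.mp b.2.2.1 i.2), b.2.2.2]⟩
        ((-1 : ℤ) ^ (b.1.1.filter (fun j => j < i.1)).card)
    else 0

noncomputable def dT {m : ℕ} (K : Finset (Finset (Fin m))) (p : ℕ) :
    (TB K p →₀ ℤ) →ₗ[ℤ] (TB K (p + 1) →₀ ℤ) :=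
  Finsupp.lift _ ℤ _ (dTaux K p)

/-- Basis of `C̃^{p−1}(K_ω)`: the simplices of `K_ω = {s ∩ ω : s ∈ K}` of cardinality `p`. -/
def CtB {m : ℕ} (K : Finset (Finset (Fin m))) (ω : Finset (Fin m)) (p : ℕ) : Type :=
  {σ : Finset (Fin m) // (∃ s ∈ K, s ∩ ω = σ) ∧ σ.card = p}

open Classical in
noncomputable def dCtaux {m : ℕ} (K : Finset (Finset (Fin m))) (ω : Finset (Fin m)) (p : ℕ)
    (b : CtB K ω p) : (CtB K ω (p + 1) →₀ ℤ) :=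
  ∑ i ∈ (ω \ b.1).attach,
    if h : ∃ s ∈ K, s ∩ ω = insert i.1 b.1 then
      Finsupp.single
        ⟨insert i.1 b.1, h,
          by
            rw [Finset.card_insert_of_notMem (Finset.mem_sdiff.mp i.2).2, b.2.2]⟩
        ((-1 : ℤ) ^ (b.1.filter (fun j => j < i.1)).card)
    else 0

/-- The reduced simplicial coboundary `δ : C̃^{p−1}(K_ω) → C̃^{p}(K_ω)`. -/
noncomputable def dCt {m : ℕ} (K : Finset (Finset (Fin m))) (ω : Finset (Fin m)) (p : ℕ) :
    (CtB K ω p →₀ ℤ) →ₗ[ℤ] (CtB K ω (p + 1) →₀ ℤ) :=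
  Finsupp.lift _ ℤ _ (dCtaux K ω p)

def prevRange {M : ℕ → Type} [∀ p, AddCommGroup (M p)] [∀ p, Module ℤ (M p)]
    (d : ∀ p, M p →ₗ[ℤ] M (p + 1)) : ∀ p : ℕ, AddSubgroup (M p)
  | 0 => ⊥
  | p + 1 => AddMonoidHom.range (d p).toAddMonoidHom

abbrev Hgrp {M : ℕ → Type} [∀ p, AddCommGroup (M p)] [∀ p, Module ℤ (M p)]
    (d : ∀ p, M p →ₗ[ℤ] M (p + 1)) (p : ℕ) : Type :=
  (d p).toAddMonoidHom.ker ⧸ (prevRange d p).addSubgroupOf (d p).toAddMonoidHom.ker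

/-!
The differential of `T(K)` moves one vertex from `τ` to `σ`, so it preserves `ω = σ ∪ τ`, and
`T(K)` is the direct sum over `ω ⊆ [m]` of the subcomplexes spanned by the pairs with
`σ ∪ τ = ω`. Sending `(σ, τ)` to `σ` identifies the summand of `ω` with `C̃*(K_ω)`, signs
included: since `K` is closed under subsets, a subset of `ω` lies in `K_ω` exactly when it
lies in `K`. Cohomology commutes with direct sums.
-/

noncomputable def quotientComapEquivOfRangeEq {P G : Type*} [AddCommGroup P] [AddCommGroup G]
    {φ : P →+ G} (hφ : Function.Injective φ) (A : AddSubgroup G) {B : AddSubgroup G}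
    (hB : φ.range = B) : P ⧸ A.comap φ ≃+ B ⧸ A.addSubgroupOf B := by
  subst hB
  refine QuotientAddGroup.congr _ _ (AddMonoidHom.ofInjective hφ) ?_
  ext ⟨_, x, rfl⟩
  simp [AddSubgroup.mem_addSubgroupOf, Subtype.ext_iff, AddMonoidHom.ofInjective_apply, hφ.eq_iff]

section congr
variable {M M' : ℕ → Type} [∀ p, AddCommGroup (M p)] [∀ p, Module ℤ (M p)]
  [∀ p, AddCommGroup (M' p)] [∀ p, Module ℤ (M' p)]
  {dM : ∀ p, M p →ₗ[ℤ] M (p + 1)} {dM' : ∀ p, M' p →ₗ[ℤ] M' (p + 1)}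
  (e : ∀ p, M p ≃+ M' p) (he : ∀ p x, e (p + 1) (dM p x) = dM' p (e p x))
include he

theorem comap_ker_of_comm (p : ℕ) :
    (dM' p).toAddMonoidHom.ker.comap (e p).toAddMonoidHom = (dM p).toAddMonoidHom.ker := by
  ext x
  simp [← he]

theorem comap_prevRange_of_comm (p : ℕ) :
    (prevRange dM' p).comap (e p).toAddMonoidHom = prevRange dM p := by
  cases p with
  | zero =>
    exact (AddMonoidHom.comap_bot _).trans ((AddMonoidHom.ker_eq_bot_iff _).2 (e 0).injective)
  | succ q =>
    ext x
    simp only [prevRange, AddSubgroup.mem_comap, AddMonoidHom.mem_range,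
      LinearMap.toAddMonoidHom_coe, AddEquiv.coe_toAddMonoidHom]
    refine ⟨fun ⟨y, hy⟩ => ⟨(e q).symm y, ?_⟩, fun ⟨y, hy⟩ => ⟨e q y, by rw [← he, hy]⟩⟩
    apply (e (q + 1)).injective
    rw [he, AddEquiv.apply_symm_apply, hy]

noncomputable def Hgrp.congr (p : ℕ) : Hgrp dM p ≃+ Hgrp dM' p := by
  let φ := (e p).toAddMonoidHom.comp (dM p).toAddMonoidHom.ker.subtype
  have hφ : Function.Injective φ := (e p).injective.comp Subtype.val_injective
  have hrange : φ.range = (dM' p).toAddMonoidHom.ker := by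
    rw [AddMonoidHom.range_comp, AddSubgroup.range_subtype, ← comap_ker_of_comm e he,
      AddSubgroup.map_comap_eq_self_of_surjective (e p).surjective]
  have hcomap : (prevRange dM' p).comap φ =
      (prevRange dM p).addSubgroupOf (dM p).toAddMonoidHom.ker := by
    rw [← AddSubgroup.comap_comap, comap_prevRange_of_comm e he]
    rfl
  exact (QuotientAddGroup.quotientAddEquivOfEq hcomap.symm).trans
    (quotientComapEquivOfRangeEq hφ _ hrange)

end congr

section directSum
-- No separate `Module ℤ` instances here: `DirectSum.lmap` builds the module structure of the
-- direct sum from those of the summands, which is defeq to the canonical `ℤ`-module structure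
-- `Hgrp` finds only when the summands carry the canonical one as well.
variable {ι : Type} {N : ι → ℕ → Type} [∀ i p, AddCommGroup (N i p)]
  (d : ∀ i p, N i p →ₗ[ℤ] N i (p + 1))

noncomputable abbrev dSum (p : ℕ) :
    (DirectSum ι fun i => N i p) →ₗ[ℤ] DirectSum ι fun i => N i (p + 1) :=
  DirectSum.lmap fun i => d i p

theorem ker_dSum (p : ℕ) :
    (dSum d p).toAddMonoidHom.ker =
      (AddSubgroup.pi Set.univ fun i => (d i p).toAddMonoidHom.ker).comap
        (DirectSum.coeFnAddMonoidHom _) :=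
  DirectSum.ker_map fun i => (d i p).toAddMonoidHom

theorem prevRange_dSum (p : ℕ) :
    prevRange (dSum d) p =
      (AddSubgroup.pi Set.univ fun i => prevRange (d i) p).comap
        (DirectSum.coeFnAddMonoidHom _) := by
  cases p with
  | zero =>
    ext x
    simp [prevRange, AddSubgroup.mem_pi, DirectSum.ext_iff]
  | succ q => exact DirectSum.range_map fun i => (d i q).toAddMonoidHom

noncomputable def Hgrp.dSumEquiv (p : ℕ) :
    Hgrp (dSum d) p ≃+ DirectSum ι fun i => Hgrp (d i) p := by
  classical
  let φ := DirectSum.map fun i => (d i p).toAddMonoidHom.ker.subtype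
  let ψ := DirectSum.map fun i =>
    QuotientAddGroup.mk' ((prevRange (d i) p).addSubgroupOf (d i p).toAddMonoidHom.ker)
  have hφ : Function.Injective φ :=
    (DirectSum.map_injective _).2 fun i => Subtype.val_injective
  have hψ : Function.Surjective ψ :=
    (DirectSum.map_surjective _).2 fun i => QuotientAddGroup.mk'_surjective _
  have hrange : φ.range = (dSum d p).toAddMonoidHom.ker := by
    rw [DirectSum.range_map, ker_dSum]
    simp only [AddSubgroup.range_subtype]
  have hker : (prevRange (dSum d) p).comap φ = ψ.ker := by
    rw [DirectSum.ker_map, prevRange_dSum]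
    ext x
    simp [φ, AddSubgroup.mem_pi, AddSubgroup.mem_addSubgroupOf]
  exact (quotientComapEquivOfRangeEq hφ _ hrange).symm.trans
    ((QuotientAddGroup.quotientAddEquivOfEq hker).trans
      (QuotientAddGroup.quotientKerEquivOfSurjective ψ hψ))

end directSum

theorem dT_single {m : ℕ} (K : Finset (Finset (Fin m))) {p : ℕ} (b : TB K p) (c : ℤ) :
    dT K p (Finsupp.single b c) = c • dTaux K p b :=
  (Finsupp.lift_apply _ _ _ _ _).trans (Finsupp.sum_single_index (zero_smul _ _))

theorem dCt_single {m : ℕ} (K : Finset (Finset (Fin m))) (ω : Finset (Fin m)) {p : ℕ}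
    (x : CtB K ω p) (c : ℤ) : dCt K ω p (Finsupp.single x c) = c • dCtaux K ω p x :=
  (Finsupp.lift_apply _ _ _ _ _).trans (Finsupp.sum_single_index (zero_smul _ _))

namespace CtB
variable {m : ℕ} {K : Finset (Finset (Fin m))} {p : ℕ}

theorem val_subset {ω : Finset (Fin m)} (x : CtB K ω p) : x.1 ⊆ ω := by
  obtain ⟨⟨s, -, hs⟩, -⟩ := x.2
  exact hs ▸ Finset.inter_subset_right

theorem sigma_mk_eq {ω ω' : Finset (Fin m)} {x : CtB K ω p} {y : CtB K ω' p}
    (h : ω = ω') (hxy : x.1 = y.1) : (⟨ω, x⟩ : Σ ω, CtB K ω p) = ⟨ω', y⟩ := by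
  subst h
  exact congrArg _ (Subtype.ext hxy)

end CtB

section Hochster
variable {m : ℕ} {K : Finset (Finset (Fin m))} (hK : ∀ σ ∈ K, ∀ τ ⊆ σ, τ ∈ K)
include hK

theorem inter_mem_of_mem {s : Finset (Fin m)} (hs : s ∈ K) (ω : Finset (Fin m)) : s ∩ ω ∈ K :=
  hK s hs _ Finset.inter_subset_left

theorem exists_inter_eq_iff_mem {σ ω : Finset (Fin m)} (hσω : σ ⊆ ω) :
    (∃ s ∈ K, s ∩ ω = σ) ↔ σ ∈ K :=
  ⟨fun ⟨_, hs, hsσ⟩ => hsσ ▸ inter_mem_of_mem hK hs ω,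
    fun hσ => ⟨σ, hσ, Finset.inter_eq_left.mpr hσω⟩⟩

def TB.equivSigmaCtB (p : ℕ) : TB K p ≃ Σ ω : Finset (Fin m), CtB K ω p where
  toFun b := ⟨b.1.1 ∪ b.1.2,
    b.1.1, ⟨b.1.1, b.2.1, Finset.inter_eq_left.mpr Finset.subset_union_left⟩, b.2.2.2⟩
  invFun x := ⟨(x.2.1, x.1 \ x.2.1), by
    obtain ⟨⟨s, hs, hsx⟩, hcard⟩ := x.2.2
    exact ⟨hsx ▸ inter_mem_of_mem hK hs x.1, Finset.disjoint_sdiff, hcard⟩⟩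
  left_inv b := Subtype.ext (Prod.ext rfl (Finset.union_sdiff_cancel_left b.2.2.1))
  right_inv x := CtB.sigma_mk_eq (Finset.union_sdiff_of_subset (CtB.val_subset x.2)) rfl

noncomputable def TB.finsuppEquiv (p : ℕ) :
    (TB K p →₀ ℤ) ≃ₗ[ℤ] DirectSum (Finset (Fin m)) fun ω => CtB K ω p →₀ ℤ :=
  (Finsupp.domLCongr (TB.equivSigmaCtB hK p)).trans (sigmaFinsuppLequivDFinsupp ℤ)

theorem TB.finsuppEquiv_single {p : ℕ} (b : TB K p) (c : ℤ) :
    TB.finsuppEquiv hK p (Finsupp.single b c) =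
      DirectSum.of _ (TB.equivSigmaCtB hK p b).1
        (Finsupp.single (TB.equivSigmaCtB hK p b).2 c) := by
  classical
  exact (congrArg sigmaFinsuppEquivDFinsupp (Finsupp.domLCongr_single (R := ℤ) _ _ _)).trans
    (sigmaFinsuppEquivDFinsupp_single _ _)

theorem TB.finsuppEquiv_dTaux {p : ℕ} {σ τ : Finset (Fin m)} (hσ : σ ∈ K) (hστ : Disjoint σ τ)
    (hcard : σ.card = p) :
    TB.finsuppEquiv hK (p + 1) (dTaux K p ⟨(σ, τ), hσ, hστ, hcard⟩) =
      DirectSum.of _ (σ ∪ τ)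
        (dCtaux K (σ ∪ τ) p
          ⟨σ, ⟨σ, hσ, Finset.inter_eq_left.mpr Finset.subset_union_left⟩, hcard⟩) := by
  unfold dTaux dCtaux
  rw [map_sum, map_sum]
  refine Finset.sum_equiv (Equiv.subtypeEquivRight fun i => ?_) (by simp) fun i _ => ?_
  · show i ∈ τ ↔ i ∈ (σ ∪ τ) \ σ
    rw [Finset.union_sdiff_left, Finset.sdiff_eq_self_of_disjoint hστ.symm]
  dsimp only [Equiv.subtypeEquivRight_apply]
  have hsub : insert i.1 σ ⊆ σ ∪ τ :=
    Finset.insert_subset (Finset.mem_union_right _ i.2) Finset.subset_union_left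
  by_cases h : insert i.1 σ ∈ K
  · rw [dif_pos h, dif_pos ((exists_inter_eq_iff_mem hK hsub).2 h)]
    refine (TB.finsuppEquiv_single hK _ _).trans ?_
    have hω : insert i.1 σ ∪ τ.erase i.1 = σ ∪ τ := by
      rw [Finset.insert_union, ← Finset.union_insert, Finset.insert_erase i.2]
    refine congrArg (fun x : Σ ω, CtB K ω (p + 1) =>
      DirectSum.of (fun ω => CtB K ω (p + 1) →₀ ℤ) x.1 (Finsupp.single x.2 _))
      (CtB.sigma_mk_eq hω ?_)
    rfl
  · rw [dif_neg h, dif_neg (mt (exists_inter_eq_iff_mem hK hsub).1 h), map_zero, map_zero]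

theorem TB.finsuppEquiv_dT (p : ℕ) (x : TB K p →₀ ℤ) :
    TB.finsuppEquiv hK (p + 1) (dT K p x) =
      dSum (dCt K) p (TB.finsuppEquiv hK p x) := by
  refine LinearMap.congr_fun (f := (TB.finsuppEquiv hK (p + 1)).toLinearMap ∘ₗ dT K p)
    (g := dSum (dCt K) p ∘ₗ (TB.finsuppEquiv hK p).toLinearMap)
    (Finsupp.lhom_ext' fun b => LinearMap.ext_ring ?_) x
  dsimp only [LinearMap.comp_apply, Finsupp.lsingle_apply, LinearEquiv.coe_coe]
  rw [dT_single, one_smul, TB.finsuppEquiv_single, dSum, DirectSum.lmap_of, dCt_single,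
    one_smul]
  exact TB.finsuppEquiv_dTaux hK b.2.1 b.2.2.1 b.2.2.2

end Hochster

theorem additive_Hochster_general {m : ℕ} (K : Finset (Finset (Fin m)))
    (hKdown : ∀ σ ∈ K, ∀ τ ⊆ σ, τ ∈ K) (p : ℕ) :
    Nonempty (Hgrp (dT K) p ≃+
      DirectSum (Finset (Fin m)) (fun ω => Hgrp (dCt K ω) p)) :=
  ⟨(Hgrp.congr (fun q => (TB.finsuppEquiv hKdown q).toAddEquiv) (TB.finsuppEquiv_dT hKdown)
    p).trans (Hgrp.dSumEquiv (dCt K) p)⟩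

/-- Additive Hochster formula: `H^p(T(K)) ≅ ⊕_{ω ⊆ [m]} H̃^{p−1}(K_ω)` for all `p ≥ 0`. -/
theorem additive_Hochster {m : ℕ} (K : Finset (Finset (Fin m)))
    (hKempty : (∅ : Finset (Fin m)) ∈ K)
    (hKdown : ∀ σ ∈ K, ∀ τ ⊆ σ, τ ∈ K) (p : ℕ) :
    Nonempty (Hgrp (dT K) p ≃+
      DirectSum (Finset (Fin m)) (fun ω => Hgrp (dCt K ω) p)) :=
  additive_Hochster_general K hKdown p
end

section
/- (Multiplicative Hochster formula, cochain level) Let ω₁, ω₂ ⊆ [m] be disjoint. Then the ℤ-bilinear map C̃^{p−1}(K_{ω₁}) × C̃^{q−1}(K_{ω₂}) → C̃^{p+q−1}(K_{ω₁∪ω₂}) defined on basis elements by σ* · σ'* = (−1)^{ε(σ,σ')} (σ∪σ')* if σ ∪ σ' ∈ K, and σ* · σ'* = 0 if σ ∪ σ' ∉ K, where ε(σ,σ') = #{(j,i) ∈ σ × σ' : i < j}, satisfies the Leibniz rule δ(x·y) = δ(x)·y + (−1)^{deg x} x·δ(y); in particular it induces a well-defined product H̃^{p−1}(K_{ω₁})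 ⊗ H̃^{q−1}(K_{ω₂}) → H̃^{p+q−1}(K_{ω₁∪ω₂}) on reduced simplicial cohomology. -/
open Classical in
/-- The product on basis elements: `σ* · σ'* = (−1)^{ε(σ,σ')}(σ∪σ')*` if `σ∪σ' ∈ K`,
else `0`. -/
noncomputable def ctMulAux {m : ℕ} (K : Finset (Finset (Fin m))) (ω₁ ω₂ : Finset (Fin m))
    (hd : Disjoint ω₁ ω₂) {p q : ℕ} (b : CtB K ω₁ p) (b' : CtB K ω₂ q) :
    (CtB K (ω₁ ∪ ω₂) (p + q) →₀ ℤ) :=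
  if h : b.1 ∪ b'.1 ∈ K then
    Finsupp.single
      ⟨b.1 ∪ b'.1,
        ⟨b.1 ∪ b'.1, h, by
          have hb : b.1 ⊆ ω₁ := by
            obtain ⟨s, _, hs⟩ := b.2.1
            rw [← hs]; exact Finset.inter_subset_right
          have hb' : b'.1 ⊆ ω₂ := by
            obtain ⟨s, _, hs⟩ := b'.2.1
            rw [← hs]; exact Finset.inter_subset_right
          exact Finset.inter_eq_left.mpr (Finset.union_subset_union hb hb')⟩,
        by
          have hb : b.1 ⊆ ω₁ := by
            obtain ⟨s, _, hs⟩ := b.2.1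
            rw [← hs]; exact Finset.inter_subset_right
          have hb' : b'.1 ⊆ ω₂ := by
            obtain ⟨s, _, hs⟩ := b'.2.1
            rw [← hs]; exact Finset.inter_subset_right
          rw [Finset.card_union_of_disjoint (hd.mono hb hb'), b.2.2, b'.2.2]⟩
      ((-1 : ℤ) ^ epsSign b.1 b'.1)
  else 0

/-- The `ℤ`-bilinear product `C̃^{p−1}(K_{ω₁}) × C̃^{q−1}(K_{ω₂}) → C̃^{p+q−1}(K_{ω₁∪ω₂})`. -/
noncomputable def ctMul {m : ℕ} (K : Finset (Finset (Fin m))) (ω₁ ω₂ : Finset (Fin m))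
    (hd : Disjoint ω₁ ω₂) (p q : ℕ) :
    (CtB K ω₁ p →₀ ℤ) →ₗ[ℤ] (CtB K ω₂ q →₀ ℤ) →ₗ[ℤ] (CtB K (ω₁ ∪ ω₂) (p + q) →₀ ℤ) :=
  Finsupp.lift _ ℤ _ (fun b => Finsupp.lift _ ℤ _ (fun b' => ctMulAux K ω₁ ω₂ hd b b'))

/-- Transport along an equality of indices. -/
noncomputable def ctCast {m : ℕ} (K : Finset (Finset (Fin m))) (ω : Finset (Fin m))
    {p q : ℕ} (h : p = q) : (CtB K ω p →₀ ℤ) →ₗ[ℤ] (CtB K ω q →₀ ℤ) :=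
  Finsupp.lmapDomain ℤ ℤ (fun b => ⟨b.1, b.2.1, h ▸ b.2.2⟩)

/-!
Send every cochain group `C̃^{p-1}(K_ω)` injectively into the free abelian group on all subsets
of `[m]`. There the coboundary and the product are given by formulas free of membership proofs
and index casts, and the Leibniz rule only has to be checked on basis elements `σ ⊆ ω₁`,
`σ' ⊆ ω₂`. The coface terms of `σ ∪ σ'` split into those adding a vertex `i ∈ ω₁` and those
adding a vertex `i ∈ ω₂`; they match the terms of `δσ* · σ'*` and `σ* · δσ'*` because
`ε(σ ∪ i, σ') = #{j ∈ σ' | j < i} + ε(σ, σ')` and `ε(σ, σ' ∪ i) = #{j ∈ σ | i < j} + ε(σ, σ')`,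
while down-closure of `K` makes a term vanish on one side exactly when it vanishes on the other.
By the Leibniz rule, cocycles multiply to cocycles and a coboundary times a cocycle is a
coboundary, which is all that is needed to pass to cohomology.
-/

theorem exists_biadditive_subquotient_lift {M₁ M₂ M₃ : Type*}
    [AddCommGroup M₁] [AddCommGroup M₂] [AddCommGroup M₃] (f : M₁ →+ M₂ →+ M₃)
    {Z₁ B₁ : AddSubgroup M₁} {Z₂ B₂ : AddSubgroup M₂} {Z₃ B₃ : AddSubgroup M₃}
    (hZ : ∀ x ∈ Z₁, ∀ y ∈ Z₂, f x y ∈ Z₃)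
    (hB₁ : ∀ x ∈ B₁, ∀ y ∈ Z₂, f x y ∈ B₃)
    (hB₂ : ∀ x ∈ Z₁, ∀ y ∈ B₂, f x y ∈ B₃) :
    ∃ P : Z₁ ⧸ B₁.addSubgroupOf Z₁ →+ Z₂ ⧸ B₂.addSubgroupOf Z₂ →+ Z₃ ⧸ B₃.addSubgroupOf Z₃,
      ∀ x y (hx : x ∈ Z₁) (hy : y ∈ Z₂) (hxy : f x y ∈ Z₃),
        P (QuotientAddGroup.mk ⟨x, hx⟩) (QuotientAddGroup.mk ⟨y, hy⟩) =
          QuotientAddGroup.mk ⟨f x y, hxy⟩ := by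
  let g : Z₁ →+ Z₂ →+ Z₃ ⧸ B₃.addSubgroupOf Z₃ :=
    AddMonoidHom.mk'
      (fun x => AddMonoidHom.mk' (fun y => QuotientAddGroup.mk ⟨f x y, hZ x x.2 y y.2⟩)
        fun y y' => by
          rw [← QuotientAddGroup.mk_add]
          congr 1
          ext
          simp)
      fun x x' => by
        ext y
        simp only [AddMonoidHom.mk'_apply, AddMonoidHom.add_apply, ← QuotientAddGroup.mk_add]
        congr 1
        ext
        simp
  have hg₁ : B₁.addSubgroupOf Z₁ ≤ g.ker := fun x hx => by
    ext y
    exact (QuotientAddGroup.eq_zero_iff _).mpr (hB₁ x hx y y.2)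
  let g₁ := QuotientAddGroup.lift _ g hg₁
  have hg₂ : B₂.addSubgroupOf Z₂ ≤ g₁.flip.ker := fun y hy => by
    ext x
    exact (QuotientAddGroup.eq_zero_iff _).mpr (hB₂ x x.2 y hy)
  exact ⟨(QuotientAddGroup.lift _ g₁.flip hg₂).flip, fun _ _ _ _ _ => rfl⟩

theorem epsSign_insert_left {m : ℕ} {σ : Finset (Fin m)} (σ' : Finset (Fin m)) {i : Fin m}
    (hi : i ∉ σ) : epsSign (insert i σ) σ' = (σ'.filter (· < i)).card + epsSign σ σ' := by
  have hdisj : Disjoint (({i} ×ˢ σ').filter fun ji : Fin m × Fin m => ji.2 < ji.1)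
      ((σ ×ˢ σ').filter fun ji => ji.2 < ji.1) :=
    Finset.disjoint_filter_filter (Finset.disjoint_product.mpr
      (Or.inl (Finset.disjoint_singleton_left.mpr hi)))
  rw [epsSign, Finset.insert_eq, Finset.union_product, Finset.filter_union,
    Finset.card_union_of_disjoint hdisj, epsSign, Finset.singleton_product, Finset.filter_map,
    Finset.card_map]
  rfl

theorem epsSign_insert_right {m : ℕ} (σ : Finset (Fin m)) {σ' : Finset (Fin m)} {i : Fin m}
    (hi : i ∉ σ') : epsSign σ (insert i σ') = (σ.filter (i < ·)).card + epsSign σ σ' := by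
  have hdisj : Disjoint ((σ ×ˢ {i}).filter fun ji : Fin m × Fin m => ji.2 < ji.1)
      ((σ ×ˢ σ').filter fun ji => ji.2 < ji.1) :=
    Finset.disjoint_filter_filter (Finset.disjoint_product.mpr
      (Or.inr (Finset.disjoint_singleton_left.mpr hi)))
  rw [epsSign, Finset.insert_eq, Finset.product_union, Finset.filter_union,
    Finset.card_union_of_disjoint hdisj, epsSign, Finset.product_singleton, Finset.filter_map,
    Finset.card_map]
  rfl

theorem card_filter_lt_add_card_filter_gt {m : ℕ} {σ : Finset (Fin m)} {i : Fin m}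
    (hi : i ∉ σ) : (σ.filter (· < i)).card + (σ.filter (i < ·)).card = σ.card := by
  have hgt : σ.filter (i < ·) = σ.filter (¬ · < i) := Finset.filter_congr fun j hj =>
    ⟨lt_asymm, fun h => lt_of_le_of_ne (not_lt.mp h) (ne_of_mem_of_not_mem hj hi).symm⟩
  rw [hgt, Finset.card_filter_add_card_filter_not]

section FullCochains

variable {m : ℕ} (K : Finset (Finset (Fin m)))

open Classical in
noncomputable def cofaceTerm (σ : Finset (Fin m)) (i : Fin m) : Finset (Fin m) →₀ ℤ :=
  if insert i σ ∈ K then Finsupp.single (insert i σ) ((-1) ^ (σ.filter (· < i)).card) else 0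

open Classical in
noncomputable def joinTerm (σ σ' : Finset (Fin m)) : Finset (Fin m) →₀ ℤ :=
  if σ ∪ σ' ∈ K then Finsupp.single (σ ∪ σ') ((-1) ^ epsSign σ σ') else 0

noncomputable def fullCoboundary (ω : Finset (Fin m)) :
    (Finset (Fin m) →₀ ℤ) →ₗ[ℤ] (Finset (Fin m) →₀ ℤ) :=
  Finsupp.lift _ ℤ _ fun σ => ∑ i ∈ ω \ σ, cofaceTerm K σ i

noncomputable def fullMul :
    (Finset (Fin m) →₀ ℤ) →ₗ[ℤ] (Finset (Fin m) →₀ ℤ) →ₗ[ℤ] (Finset (Fin m) →₀ ℤ) :=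
  Finsupp.lift _ ℤ _ fun σ => Finsupp.lift _ ℤ _ fun σ' => joinTerm K σ σ'

theorem fullCoboundary_single (ω σ : Finset (Fin m)) (c : ℤ) :
    fullCoboundary K ω (Finsupp.single σ c) = c • ∑ i ∈ ω \ σ, cofaceTerm K σ i := by
  simp [fullCoboundary]

theorem fullMul_single_single (σ σ' : Finset (Fin m)) (c c' : ℤ) :
    fullMul K (Finsupp.single σ c) (Finsupp.single σ' c') = (c * c') • joinTerm K σ σ' := by
  simp [fullMul, mul_smul, smul_comm c']

variable {K}

theorem cofaceTerm_eq_zero (hKdown : ∀ σ ∈ K, ∀ τ ⊆ σ, τ ∈ K) {σ : Finset (Fin m)}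
    (hσ : σ ∉ K) (i : Fin m) : cofaceTerm K σ i = 0 :=
  if_neg fun h => hσ (hKdown _ h _ (Finset.subset_insert i σ))

theorem fullMul_cofaceTerm_left (hKdown : ∀ σ ∈ K, ∀ τ ⊆ σ, τ ∈ K)
    {σ σ' : Finset (Fin m)} {i : Fin m} (hiσ : i ∉ σ) (hσσ' : Disjoint σ σ') :
    fullMul K (cofaceTerm K σ i) (Finsupp.single σ' 1) =
      (-1) ^ epsSign σ σ' • cofaceTerm K (σ ∪ σ') i := by
  have hunion : insert i σ ∪ σ' = insert i (σ ∪ σ') := Finset.insert_union i σ σ'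
  by_cases hK : insert i (σ ∪ σ') ∈ K
  · have hKσ : insert i σ ∈ K := hKdown _ hK _ (hunion ▸ Finset.subset_union_left)
    rw [cofaceTerm, if_pos hKσ, fullMul_single_single, joinTerm, hunion, if_pos hK,
      cofaceTerm, if_pos hK, Finsupp.smul_single, Finsupp.smul_single, smul_eq_mul,
      smul_eq_mul, Finset.filter_union,
      Finset.card_union_of_disjoint (Finset.disjoint_filter_filter hσσ'),
      epsSign_insert_left σ' hiσ]
    congr 1
    ring
  · rw [cofaceTerm, cofaceTerm, if_neg hK, smul_zero]
    split_ifs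
    · rw [fullMul_single_single, joinTerm, hunion, if_neg hK, smul_zero]
    · rw [map_zero, LinearMap.zero_apply]

theorem fullMul_cofaceTerm_right (hKdown : ∀ σ ∈ K, ∀ τ ⊆ σ, τ ∈ K)
    {σ σ' : Finset (Fin m)} {i : Fin m} (hiσ : i ∉ σ) (hiσ' : i ∉ σ') (hσσ' : Disjoint σ σ') :
    (-1) ^ σ.card • fullMul K (Finsupp.single σ 1) (cofaceTerm K σ' i) =
      (-1) ^ epsSign σ σ' • cofaceTerm K (σ ∪ σ') i := by
  have hunion : σ ∪ insert i σ' = insert i (σ ∪ σ') := Finset.union_insert i σ σ'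
  by_cases hK : insert i (σ ∪ σ') ∈ K
  · have hKσ' : insert i σ' ∈ K := hKdown _ hK _ (hunion ▸ Finset.subset_union_right)
    rw [cofaceTerm, if_pos hKσ', fullMul_single_single, joinTerm, hunion, if_pos hK,
      cofaceTerm, if_pos hK, Finsupp.smul_single, Finsupp.smul_single, Finsupp.smul_single,
      smul_eq_mul, smul_eq_mul, smul_eq_mul, Finset.filter_union,
      Finset.card_union_of_disjoint (Finset.disjoint_filter_filter hσσ'),
      epsSign_insert_right σ hiσ', ← card_filter_lt_add_card_filter_gt hiσ]
    congr 1
    simp only [one_mul, ← pow_add]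
    -- `#σ = #{j ∈ σ | j < i} + #{j ∈ σ | i < j}`: the exponents differ by `2 * #{j ∈ σ | i < j}`
    rw [show ∀ a b c e : ℕ, a + b + (c + (b + e)) = e + (a + c) + (b + b) by omega, pow_add,
      Even.neg_one_pow ⟨_, rfl⟩, mul_one]
  · rw [cofaceTerm, cofaceTerm, if_neg hK, smul_zero]
    split_ifs
    · rw [fullMul_single_single, joinTerm, hunion, if_neg hK, smul_zero, smul_zero]
    · rw [map_zero, smul_zero]

theorem fullCoboundary_joinTerm (hKdown : ∀ σ ∈ K, ∀ τ ⊆ σ, τ ∈ K) (ω σ σ' : Finset (Fin m)) :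
    fullCoboundary K ω (joinTerm K σ σ') =
      (-1) ^ epsSign σ σ' • ∑ i ∈ ω \ (σ ∪ σ'), cofaceTerm K (σ ∪ σ') i := by
  rw [joinTerm]
  split_ifs with h
  · rw [fullCoboundary_single]
  · rw [map_zero, Finset.sum_eq_zero fun i _ => cofaceTerm_eq_zero hKdown h i, smul_zero]

theorem fullCoboundary_fullMul_single (hKdown : ∀ σ ∈ K, ∀ τ ⊆ σ, τ ∈ K)
    {ω₁ ω₂ σ σ' : Finset (Fin m)} (hd : Disjoint ω₁ ω₂) (hσ : σ ⊆ ω₁) (hσ' : σ' ⊆ ω₂) :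
    fullCoboundary K (ω₁ ∪ ω₂) (fullMul K (Finsupp.single σ 1) (Finsupp.single σ' 1)) =
      fullMul K (fullCoboundary K ω₁ (Finsupp.single σ 1)) (Finsupp.single σ' 1) +
        (-1) ^ σ.card • fullMul K (Finsupp.single σ 1)
          (fullCoboundary K ω₂ (Finsupp.single σ' 1)) := by
  have hσσ' : Disjoint σ σ' := hd.mono hσ hσ'
  have hsplit : (ω₁ ∪ ω₂) \ (σ ∪ σ') = ω₁ \ σ ∪ ω₂ \ σ' := by
    ext i
    have hi₁₂ : i ∈ ω₁ → i ∉ ω₂ := fun h => Finset.disjoint_left.mp hd h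
    simp only [Finset.mem_sdiff, Finset.mem_union]
    constructor
    · tauto
    · rintro (⟨hi, hiσ⟩ | ⟨hi, hiσ'⟩)
      · exact ⟨Or.inl hi, fun h => h.elim hiσ fun h' => hi₁₂ hi (hσ' h')⟩
      · exact ⟨Or.inr hi, fun h => h.elim (fun h' => hi₁₂ (hσ h') hi) hiσ'⟩
  rw [fullMul_single_single, one_mul, one_smul, fullCoboundary_joinTerm hKdown, hsplit,
    Finset.sum_union (hd.mono Finset.sdiff_subset Finset.sdiff_subset), smul_add,
    fullCoboundary_single, fullCoboundary_single, one_smul, one_smul, map_sum,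
    LinearMap.sum_apply, map_sum, Finset.smul_sum, Finset.smul_sum, Finset.smul_sum]
  congr 1
  · refine Finset.sum_congr rfl fun i hi => ?_
    obtain ⟨hi, hiσ⟩ := Finset.mem_sdiff.mp hi
    exact (fullMul_cofaceTerm_left hKdown hiσ hσσ').symm
  · refine Finset.sum_congr rfl fun i hi => ?_
    obtain ⟨hi, hiσ'⟩ := Finset.mem_sdiff.mp hi
    exact (fullMul_cofaceTerm_right hKdown
      (fun h => Finset.disjoint_left.mp hd (hσ h) hi) hiσ' hσσ').symm

end FullCochains

section Embedding

variable {m : ℕ} {K : Finset (Finset (Fin m))} {ω : Finset (Fin m)}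

theorem exists_mem_inter_eq_iff (hKdown : ∀ σ ∈ K, ∀ τ ⊆ σ, τ ∈ K) (τ : Finset (Fin m)) :
    (∃ s ∈ K, s ∩ ω = τ) ↔ τ ∈ K ∧ τ ⊆ ω := by
  constructor
  · rintro ⟨s, hs, rfl⟩
    exact ⟨hKdown s hs _ Finset.inter_subset_left, Finset.inter_subset_right⟩
  · rintro ⟨hτ, hτω⟩
    exact ⟨τ, hτ, Finset.inter_eq_left.mpr hτω⟩

theorem CtB.val_subset_s10 {p : ℕ} (b : CtB K ω p) : b.1 ⊆ ω := by
  obtain ⟨s, -, hs⟩ := b.2.1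
  exact hs ▸ Finset.inter_subset_right

variable (K ω) in
noncomputable def toFull (p : ℕ) : (CtB K ω p →₀ ℤ) →ₗ[ℤ] (Finset (Fin m) →₀ ℤ) :=
  Finsupp.lmapDomain ℤ ℤ Subtype.val

theorem toFull_injective (p : ℕ) : Function.Injective (toFull K ω p) :=
  Finsupp.mapDomain_injective Subtype.val_injective

theorem toFull_single {p : ℕ} (b : CtB K ω p) (c : ℤ) :
    toFull K ω p (Finsupp.single b c) = Finsupp.single b.1 c :=
  Finsupp.mapDomain_single

theorem toFull_ctCast {p q : ℕ} (h : p = q) (x : CtB K ω p →₀ ℤ) :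
    toFull K ω q (ctCast K ω h x) = toFull K ω p x :=
  Finsupp.mapDomain_comp.symm

theorem toFull_ctMul {ω₁ ω₂ : Finset (Fin m)} (hd : Disjoint ω₁ ω₂) {p q : ℕ}
    (x : CtB K ω₁ p →₀ ℤ) (y : CtB K ω₂ q →₀ ℤ) :
    toFull K (ω₁ ∪ ω₂) (p + q) (ctMul K ω₁ ω₂ hd p q x y) =
      fullMul K (toFull K ω₁ p x) (toFull K ω₂ q y) := by
  suffices h : (ctMul K ω₁ ω₂ hd p q).compr₂ (toFull K (ω₁ ∪ ω₂) (p + q)) =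
      (fullMul K).compl₁₂ (toFull K ω₁ p) (toFull K ω₂ q) from LinearMap.congr_fun₂ h x y
  ext b b' : 4
  simp only [LinearMap.compr₂_apply, LinearMap.compl₁₂_apply, Finsupp.lsingle_apply,
    LinearMap.coe_comp, Function.comp_apply, ctMul, Finsupp.lift_apply,
    Finsupp.sum_single_index, zero_smul, one_smul, toFull_single, fullMul_single_single, mul_one]
  rw [ctMulAux, joinTerm]
  split_ifs
  · exact toFull_single _ _
  · exact map_zero _

theorem toFull_dCt (hKdown : ∀ σ ∈ K, ∀ τ ⊆ σ, τ ∈ K) {p : ℕ} (x : CtB K ω p →₀ ℤ) :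
    toFull K ω (p + 1) (dCt K ω p x) = fullCoboundary K ω (toFull K ω p x) := by
  suffices h : (toFull K ω (p + 1)).comp (dCt K ω p) = (fullCoboundary K ω).comp (toFull K ω p)
    from LinearMap.congr_fun h x
  ext b : 2
  simp only [dCt, LinearMap.coe_comp, Function.comp_apply, Finsupp.lsingle_apply,
    Finsupp.lift_apply, Finsupp.sum_single_index, zero_smul, one_smul, toFull_single,
    fullCoboundary_single, dCtaux, map_sum]
  rw [← Finset.sum_attach (ω \ b.1)]
  refine Finset.sum_congr rfl fun i _ => ?_
  have hiω : insert i.1 b.1 ⊆ ω := Finset.insert_subset (Finset.mem_sdiff.mp i.2).1 b.val_subset_s10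
  rw [cofaceTerm]
  split_ifs with h h' h'
  · exact toFull_single _ _
  · exact absurd ((exists_mem_inter_eq_iff hKdown _).mp h).1 h'
  · exact absurd ((exists_mem_inter_eq_iff hKdown _).mpr ⟨h', hiω⟩) h
  · exact map_zero _

end Embedding

section Leibniz

variable {m : ℕ} {K : Finset (Finset (Fin m))}

theorem ctCast_rfl {ω : Finset (Fin m)} {p : ℕ} (x : CtB K ω p →₀ ℤ) : ctCast K ω rfl x = x :=
  toFull_injective p (toFull_ctCast rfl x)

theorem mem_prevRange_of_dCt_eq_ctCast {ω : Finset (Fin m)} {k n : ℕ} (h : n = k + 1)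
    {z : CtB K ω n →₀ ℤ} {w : CtB K ω k →₀ ℤ} (hw : dCt K ω k w = ctCast K ω h z) :
    z ∈ prevRange (dCt K ω) n := by
  subst h
  exact ⟨w, hw.trans (ctCast_rfl z)⟩

variable {ω₁ ω₂ : Finset (Fin m)}

theorem dCt_ctMul_single (hKdown : ∀ σ ∈ K, ∀ τ ⊆ σ, τ ∈ K) (hd : Disjoint ω₁ ω₂) {p q : ℕ}
    (b : CtB K ω₁ p) (b' : CtB K ω₂ q) :
    dCt K (ω₁ ∪ ω₂) (p + q) (ctMul K ω₁ ω₂ hd p q (Finsupp.single b 1) (Finsupp.single b' 1)) =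
      ctCast K (ω₁ ∪ ω₂) (Nat.succ_add p q)
        (ctMul K ω₁ ω₂ hd (p + 1) q (dCt K ω₁ p (Finsupp.single b 1)) (Finsupp.single b' 1)) +
      ((-1 : ℤ) ^ p) • ctCast K (ω₁ ∪ ω₂) (Nat.add_succ p q)
        (ctMul K ω₁ ω₂ hd p (q + 1) (Finsupp.single b 1) (dCt K ω₂ q (Finsupp.single b' 1))) := by
  apply toFull_injective
  simp only [map_add, map_smul, toFull_dCt hKdown, toFull_ctMul, toFull_ctCast, toFull_single]
  have h := fullCoboundary_fullMul_single hKdown hd b.val_subset_s10 b'.val_subset_s10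
  rwa [b.2.2] at h

theorem dCt_ctMul (hKdown : ∀ σ ∈ K, ∀ τ ⊆ σ, τ ∈ K) (hd : Disjoint ω₁ ω₂) (p q : ℕ)
    (x : CtB K ω₁ p →₀ ℤ) (y : CtB K ω₂ q →₀ ℤ) :
    dCt K (ω₁ ∪ ω₂) (p + q) (ctMul K ω₁ ω₂ hd p q x y) =
      ctCast K (ω₁ ∪ ω₂) (Nat.succ_add p q) (ctMul K ω₁ ω₂ hd (p + 1) q (dCt K ω₁ p x) y) +
      ((-1 : ℤ) ^ p) • ctCast K (ω₁ ∪ ω₂) (Nat.add_succ p q)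
        (ctMul K ω₁ ω₂ hd p (q + 1) x (dCt K ω₂ q y)) := by
  induction x using Finsupp.induction_linear with
  | zero => simp
  | add x₁ x₂ h₁ h₂ =>
    simp only [map_add, LinearMap.add_apply, h₁, h₂, smul_add]
    abel
  | single b c =>
    induction y using Finsupp.induction_linear with
    | zero => simp
    | add y₁ y₂ h₁ h₂ =>
      simp only [map_add, h₁, h₂, smul_add]
      abel
    | single b' c' =>
      rw [← Finsupp.smul_single_one b c, ← Finsupp.smul_single_one b' c']
      simp only [map_smul, LinearMap.smul_apply, dCt_ctMul_single hKdown hd b b']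
      module

theorem dCt_ctMul_eq_zero (hKdown : ∀ σ ∈ K, ∀ τ ⊆ σ, τ ∈ K) (hd : Disjoint ω₁ ω₂) {p q : ℕ}
    {x : CtB K ω₁ p →₀ ℤ} {y : CtB K ω₂ q →₀ ℤ}
    (hx : dCt K ω₁ p x = 0) (hy : dCt K ω₂ q y = 0) :
    dCt K (ω₁ ∪ ω₂) (p + q) (ctMul K ω₁ ω₂ hd p q x y) = 0 := by
  simp [dCt_ctMul hKdown hd, hx, hy]

theorem ctMul_mem_prevRange_of_left (hKdown : ∀ σ ∈ K, ∀ τ ⊆ σ, τ ∈ K) (hd : Disjoint ω₁ ω₂)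
    {p q : ℕ} {x : CtB K ω₁ p →₀ ℤ} {y : CtB K ω₂ q →₀ ℤ}
    (hx : x ∈ prevRange (dCt K ω₁) p) (hy : dCt K ω₂ q y = 0) :
    ctMul K ω₁ ω₂ hd p q x y ∈ prevRange (dCt K (ω₁ ∪ ω₂)) (p + q) := by
  cases p with
  | zero =>
    rw [show x = 0 from hx, map_zero, LinearMap.zero_apply]
    exact zero_mem _
  | succ p =>
    obtain ⟨x', rfl⟩ := hx
    refine mem_prevRange_of_dCt_eq_ctCast (Nat.succ_add p q) (w := ctMul K ω₁ ω₂ hd p q x' y) ?_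
    simp [dCt_ctMul hKdown hd, hy]

theorem ctMul_mem_prevRange_of_right (hKdown : ∀ σ ∈ K, ∀ τ ⊆ σ, τ ∈ K) (hd : Disjoint ω₁ ω₂)
    {p q : ℕ} {x : CtB K ω₁ p →₀ ℤ} {y : CtB K ω₂ q →₀ ℤ}
    (hx : dCt K ω₁ p x = 0) (hy : y ∈ prevRange (dCt K ω₂) q) :
    ctMul K ω₁ ω₂ hd p q x y ∈ prevRange (dCt K (ω₁ ∪ ω₂)) (p + q) := by
  cases q with
  | zero =>
    rw [show y = 0 from hy, map_zero]
    exact zero_mem _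
  | succ q =>
    obtain ⟨y', rfl⟩ := hy
    refine mem_prevRange_of_dCt_eq_ctCast (Nat.add_succ p q)
      (w := (-1 : ℤ) ^ p • ctMul K ω₁ ω₂ hd p q x y') ?_
    simp [dCt_ctMul hKdown hd, hx, smul_smul, ← pow_add]

end Leibniz

theorem ctMul_leibniz_and_induced_product_general {m : ℕ} (K : Finset (Finset (Fin m)))
    (hKdown : ∀ σ ∈ K, ∀ τ ⊆ σ, τ ∈ K)
    (ω₁ ω₂ : Finset (Fin m)) (hd : Disjoint ω₁ ω₂) :
    (∀ (p q : ℕ) (x : CtB K ω₁ p →₀ ℤ) (y : CtB K ω₂ q →₀ ℤ),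
      dCt K (ω₁ ∪ ω₂) (p + q) (ctMul K ω₁ ω₂ hd p q x y) =
        ctCast K (ω₁ ∪ ω₂) (Nat.succ_add p q)
          (ctMul K ω₁ ω₂ hd (p + 1) q (dCt K ω₁ p x) y) +
        ((-1 : ℤ) ^ p) • ctCast K (ω₁ ∪ ω₂) (Nat.add_succ p q)
          (ctMul K ω₁ ω₂ hd p (q + 1) x (dCt K ω₂ q y))) ∧
    (∀ p q : ℕ,
      ∃ P : Hgrp (dCt K ω₁) p →+ Hgrp (dCt K ω₂) q →+ Hgrp (dCt K (ω₁ ∪ ω₂)) (p + q),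
        ∀ (x : CtB K ω₁ p →₀ ℤ) (y : CtB K ω₂ q →₀ ℤ)
          (hx : x ∈ (dCt K ω₁ p).toAddMonoidHom.ker)
          (hy : y ∈ (dCt K ω₂ q).toAddMonoidHom.ker)
          (hxy : ctMul K ω₁ ω₂ hd p q x y ∈
            (dCt K (ω₁ ∪ ω₂) (p + q)).toAddMonoidHom.ker),
          P (QuotientAddGroup.mk ⟨x, hx⟩) (QuotientAddGroup.mk ⟨y, hy⟩) =
            QuotientAddGroup.mk ⟨ctMul K ω₁ ω₂ hd p q x y, hxy⟩) :=
  ⟨dCt_ctMul hKdown hd, fun p q =>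
    exists_biadditive_subquotient_lift
      (LinearMap.toAddMonoidHom'.comp (ctMul K ω₁ ω₂ hd p q).toAddMonoidHom)
      (fun _ hx _ hy => dCt_ctMul_eq_zero hKdown hd hx hy)
      (fun _ hx _ hy => ctMul_mem_prevRange_of_left hKdown hd hx hy)
      (fun _ hx _ hy => ctMul_mem_prevRange_of_right hKdown hd hx hy)⟩

/-- The cochain-level product satisfies the graded Leibniz rule, and induces a product
on reduced simplicial cohomology `H̃^{p−1}(K_{ω₁}) ⊗ H̃^{q−1}(K_{ω₂}) → H̃^{p+q−1}(K_{ω₁∪ω₂})`. -/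
theorem ctMul_leibniz_and_induced_product {m : ℕ} (K : Finset (Finset (Fin m)))
    (hKempty : (∅ : Finset (Fin m)) ∈ K)
    (hKdown : ∀ σ ∈ K, ∀ τ ⊆ σ, τ ∈ K)
    (ω₁ ω₂ : Finset (Fin m)) (hd : Disjoint ω₁ ω₂) :
    (∀ (p q : ℕ) (x : CtB K ω₁ p →₀ ℤ) (y : CtB K ω₂ q →₀ ℤ),
      dCt K (ω₁ ∪ ω₂) (p + q) (ctMul K ω₁ ω₂ hd p q x y) =
        ctCast K (ω₁ ∪ ω₂) (Nat.succ_add p q)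
          (ctMul K ω₁ ω₂ hd (p + 1) q (dCt K ω₁ p x) y) +
        ((-1 : ℤ) ^ p) • ctCast K (ω₁ ∪ ω₂) (Nat.add_succ p q)
          (ctMul K ω₁ ω₂ hd p (q + 1) x (dCt K ω₂ q y))) ∧
    (∀ p q : ℕ,
      ∃ P : Hgrp (dCt K ω₁) p →+ Hgrp (dCt K ω₂) q →+ Hgrp (dCt K (ω₁ ∪ ω₂)) (p + q),
        ∀ (x : CtB K ω₁ p →₀ ℤ) (y : CtB K ω₂ q →₀ ℤ)
          (hx : x ∈ (dCt K ω₁ p).toAddMonoidHom.ker)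
          (hy : y ∈ (dCt K ω₂ q).toAddMonoidHom.ker)
          (hxy : ctMul K ω₁ ω₂ hd p q x y ∈
            (dCt K (ω₁ ∪ ω₂) (p + q)).toAddMonoidHom.ker),
          P (QuotientAddGroup.mk ⟨x, hx⟩) (QuotientAddGroup.mk ⟨y, hy⟩) =
            QuotientAddGroup.mk ⟨ctMul K ω₁ ω₂ hd p q x y, hxy⟩) :=
  ctMul_leibniz_and_induced_product_general K hKdown ω₁ ω₂ hd
end
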